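/- arXiv:2406.09955 — 2 statements merged into one kernel-verified Lean document; each statement's English description precedes it below -/
import Mathlib

section
/- A semigroup (T_t)_{t≥0} of sublinear transition operators is uniformly continuous if and only if there exists a bounded sublinear rate operator Q such that for every t ≥ 0 the sequence ((I + (t/n)Q)^n)_{n∈ℕ} converges in operator seminorm to T_t. -/
open Filter Topology BoundedContinuousFunction ENNReal NNReal

/-- The space of (possibly nonlinear) operators on the Banach space `X →ᵇ ℝ`
of bounded (continuous, i.e. with `X` discrete: all) real-valued functions. -/
abbrev Op (X : Type*) [TopologicalSpace X] :=
  BoundedContinuousFunction X ℝ → BoundedContinuousFunction X ℝ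

/-- The operator seminorm `‖A‖ = sup {‖A f‖/‖f‖ : f ≠ 0}`, a value in `[0,∞]`. -/
noncomputable def opSemiNorm {X : Type*} [TopologicalSpace X] (A : Op X) : ℝ≥0∞ :=
  ⨆ (f : BoundedContinuousFunction X ℝ) (_ : f ≠ 0), (‖A f‖₊ : ℝ≥0∞) / (‖f‖₊ : ℝ≥0∞)

/-- The operator norm distance `d(A,B) = ‖A 0 − B 0‖∞ + ‖A − B‖`. -/
noncomputable def opDist {X : Type*} [TopologicalSpace X] (A B : Op X) : ℝ≥0∞ :=
  (‖A 0 - B 0‖₊ : ℝ≥0∞) + opSemiNorm (A - B)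

/-- Sublinear transition operator: (T1) positive homogeneity, (T2) subadditivity,
(T3) `T f ≤ sup f` pointwise. -/
def IsSublinearTransition {X : Type*} [TopologicalSpace X] (T : Op X) : Prop :=
  (∀ (c : ℝ), 0 ≤ c → ∀ f, T (c • f) = c • T f) ∧
  (∀ f g, ∀ x, T (f + g) x ≤ T f x + T g x) ∧
  (∀ f, ∀ x, T f x ≤ ⨆ y, f y)

/-- Sublinear rate operator: (Q1) positive homogeneity, (Q2) subadditivity,
(Q3) constants map to zero, (Q4) positive maximum principle. -/
def IsSublinearRate {X : Type*} [TopologicalSpace X] (Q : Op X) : Prop :=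
  (∀ (c : ℝ), 0 ≤ c → ∀ f, Q (c • f) = c • Q f) ∧
  (∀ f g, ∀ x, Q (f + g) x ≤ Q f x + Q g x) ∧
  (∀ (c : ℝ), Q (BoundedContinuousFunction.const X c) = 0) ∧
  (∀ f, ∀ x : X, (⨆ y, f y) = f x → 0 ≤ f x → Q f x ≤ 0)

/-- The Euler approximation `(I + (t/n) Q)^n` (n-fold composition). -/
noncomputable def euler {X : Type*} [TopologicalSpace X] (Q : Op X) (t : ℝ) (n : ℕ) : Op X :=
  (fun f => f + (t / (n : ℝ)) • Q f)^[n]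

/-- Uniform continuity of a semigroup `(S_t)_{t ≥ 0}`:
`‖S_s − S_t‖ → 0` as `s → t` (within `s ≥ 0`), for every `t ≥ 0`. -/
def IsUniformlyContinuousSG {X : Type*} [TopologicalSpace X] (S : ℝ → Op X) : Prop :=
  ∀ t : ℝ, 0 ≤ t →
    Tendsto (fun s => opSemiNorm (S s - S t)) (nhdsWithin t (Set.Ici 0)) (nhds 0)

/-- The indicator function `1_x` of the singleton `{x}`. -/
noncomputable def indic {X : Type*} [TopologicalSpace X] [DiscreteTopology X] (x : X) :
    BoundedContinuousFunction X ℝ :=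
  BoundedContinuousFunction.ofNormedAddCommGroup
    (Set.indicator {x} (fun _ => (1 : ℝ))) continuous_of_discreteTopology 1
    (by
      intro y
      classical
      rw [Set.indicator_apply]
      split_ifs <;> simp)

/-- Downward continuity (continuity from above) of an operator. -/
def DownwardContinuous {X : Type*} [TopologicalSpace X] (A : Op X) : Prop :=
  ∀ (f : ℕ → BoundedContinuousFunction X ℝ) (g : BoundedContinuousFunction X ℝ),
    (∀ n x, f (n + 1) x ≤ f n x) →
    (∀ x, Tendsto (fun n => f n x) atTop (nhds (g x))) →
    ∀ x, Tendsto (fun n => A (f n) x) atTop (nhds (A g x))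

/-!
Uniform continuity at `0` gives `‖T h - I‖ ≤ 1/4` for small `h`. A sublinear transition operator
`S` satisfies `S (f + u) ≈ S f + u` whenever `u` and `-u` are almost fixed, so its iterates obey the
second-order expansion `S^k f - f = k (S f - f) + O((k a)²)` with `a = ‖S - I‖`; for `S = T h` and
`k ≈ δ / h` this forces `‖T h - I‖ = O(h)`. The same expansion makes the difference quotients
`(T s - I) / s` converge as `s → 0`; the limit `Q` is a bounded sublinear rate operator with
`T h = I + h Q + O(h²)`, and telescoping gives `(I + (t/n) Q)^n → T t`. Conversely, a bounded `Q`
gives `‖(I + (t/n) Q)^n - I‖ ≤ exp (t ‖Q‖) - 1`, hence `‖T h - I‖ ≤ exp (h ‖Q‖) - 1`, and uniform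
continuity follows from the semigroup law and the contractivity of each `T t`.
-/

section OpSemiNorm

variable {X : Type*} [TopologicalSpace X]

lemma opSemiNorm_le_ofReal {A : Op X} {C : ℝ} (h : ∀ f, ‖A f‖ ≤ C * ‖f‖) :
    opSemiNorm A ≤ ENNReal.ofReal C := by
  refine iSup₂_le fun f hf => ?_
  rw [ENNReal.div_le_iff (by simpa using hf) (by simp), ← enorm_eq_nnnorm, ← enorm_eq_nnnorm,
    ← ofReal_norm, ← ofReal_norm, ← ENNReal.ofReal_mul' (norm_nonneg f)]
  exact ENNReal.ofReal_le_ofReal (h f)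

lemma norm_apply_le_of_opSemiNorm_le {A : Op X} (h0 : A 0 = 0) {C : ℝ≥0∞} (hC : C ≠ ⊤)
    (h : opSemiNorm A ≤ C) (f : X →ᵇ ℝ) : ‖A f‖ ≤ C.toReal * ‖f‖ := by
  rcases eq_or_ne f 0 with rfl | hf
  · simp [h0]
  have hle := (le_iSup₂ (f := fun (g : X →ᵇ ℝ) (_ : g ≠ 0) => (‖A g‖₊ : ℝ≥0∞) / ‖g‖₊) f hf).trans h
  rw [ENNReal.div_le_iff (by simpa using hf) (by simp)] at hle
  rw [← ENNReal.ofReal_le_ofReal_iff (by positivity), ENNReal.ofReal_mul ENNReal.toReal_nonneg,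
    ENNReal.ofReal_toReal hC, ofReal_norm, ofReal_norm, enorm_eq_nnnorm, enorm_eq_nnnorm]
  exact hle

lemma tendsto_opSemiNorm_zero {ι : Type*} {l : Filter ι} {A : ι → Op X} {c : ι → ℝ}
    (hA : ∀ᶠ i in l, ∀ f, ‖A i f‖ ≤ c i * ‖f‖) (hc : Tendsto c l (𝓝 0)) :
    Tendsto (fun i => opSemiNorm (A i)) l (𝓝 0) := by
  have hof : Tendsto (fun i => ENNReal.ofReal (c i)) l (𝓝 0) := by
    simpa using ENNReal.tendsto_ofReal hc
  refine tendsto_of_tendsto_of_tendsto_of_le_of_le' tendsto_const_nhds hof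
    (Eventually.of_forall fun _ => zero_le) ?_
  filter_upwards [hA] with i hi
  exact opSemiNorm_le_ofReal hi

lemma norm_sub_le_of_subadditive {A : Op X} {C : ℝ} (hC : 0 ≤ C)
    (hadd : ∀ f g x, A (f + g) x ≤ A f x + A g x) (hle : ∀ f x, A f x ≤ C * ‖f‖)
    (u v : X →ᵇ ℝ) : ‖A u - A v‖ ≤ C * ‖u - v‖ := by
  have key : ∀ u v : X →ᵇ ℝ, ∀ x, A u x - A v x ≤ C * ‖u - v‖ := fun u v x => by
    have h := hadd v (u - v) x
    rw [add_sub_cancel] at h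
    linarith [hle (u - v) x]
  refine (norm_le (by positivity)).2 fun x => ?_
  rw [BoundedContinuousFunction.sub_apply, Real.norm_eq_abs, abs_sub_le_iff]
  exact ⟨key u v x, norm_sub_rev u v ▸ key v u x⟩

end OpSemiNorm

section Iterate

variable {V : Type*} [SeminormedAddCommGroup V]

lemma norm_iterate_sub_le_of_norm_sub_le {E : V → V} {a : ℝ} (ha : 0 ≤ a)
    (hE : ∀ g, ‖E g - g‖ ≤ a * ‖g‖) (n : ℕ) (f : V) :
    ‖E^[n] f - f‖ ≤ ((1 + a) ^ n - 1) * ‖f‖ := by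
  induction n with
  | zero => simp
  | succ n ih =>
    have hnorm : ‖E^[n] f‖ ≤ (1 + a) ^ n * ‖f‖ := by
      linarith [norm_le_norm_add_norm_sub' (E^[n] f) f]
    calc ‖E^[n + 1] f - f‖ ≤ ‖E (E^[n] f) - E^[n] f‖ + ‖E^[n] f - f‖ := by
          rw [Function.iterate_succ_apply']; exact norm_sub_le_norm_sub_add_norm_sub _ _ _
      _ ≤ a * ((1 + a) ^ n * ‖f‖) + ((1 + a) ^ n - 1) * ‖f‖ :=
          add_le_add ((hE _).trans (mul_le_mul_of_nonneg_left hnorm ha)) ih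
      _ = ((1 + a) ^ (n + 1) - 1) * ‖f‖ := by ring

lemma norm_iterate_sub_iterate_le {E S : V → V} {L c : ℝ} (hL : 1 ≤ L) (hc : 0 ≤ c)
    (hE : ∀ a b, ‖E a - E b‖ ≤ L * ‖a - b‖) (hS : ∀ a, ‖S a‖ ≤ ‖a‖)
    (hES : ∀ a, ‖E a - S a‖ ≤ c * ‖a‖) (n : ℕ) (f : V) :
    ‖E^[n] f - S^[n] f‖ ≤ n * L ^ n * c * ‖f‖ := by
  have hSn : ∀ m, ‖S^[m] f‖ ≤ ‖f‖ := fun m => by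
    induction m with
    | zero => rfl
    | succ m ihm => rw [Function.iterate_succ_apply']; exact (hS _).trans ihm
  induction n with
  | zero => simp
  | succ n ih =>
    have hLn : 1 ≤ L ^ (n + 1) := one_le_pow₀ hL
    rw [Function.iterate_succ_apply', Function.iterate_succ_apply']
    calc ‖E (E^[n] f) - S (S^[n] f)‖
        ≤ ‖E (E^[n] f) - E (S^[n] f)‖ + ‖E (S^[n] f) - S (S^[n] f)‖ :=
          norm_sub_le_norm_sub_add_norm_sub _ _ _
      _ ≤ L * (n * L ^ n * c * ‖f‖) + L ^ (n + 1) * (c * ‖f‖) := by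
          gcongr
          · exact (hE _ _).trans (by gcongr)
          · exact (hES _).trans ((mul_le_mul_of_nonneg_left (hSn n) hc).trans
              (le_mul_of_one_le_left (by positivity) hLn))
      _ = (n + 1 : ℕ) * L ^ (n + 1) * c * ‖f‖ := by push_cast; ring

end Iterate

namespace IsSublinearTransition

variable {X : Type*} [TopologicalSpace X] {S : Op X}

lemma map_zero (hS : IsSublinearTransition S) : S 0 = 0 := by
  simpa using hS.1 0 le_rfl 0

lemma apply_le_norm (hS : IsSublinearTransition S) (f : X →ᵇ ℝ) (x : X) : S f x ≤ ‖f‖ := by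
  have : Nonempty X := ⟨x⟩
  exact (hS.2.2 f x).trans (ciSup_le fun y => (Real.le_norm_self _).trans (f.norm_coe_le_norm y))

lemma norm_sub_le (hS : IsSublinearTransition S) (u v : X →ᵇ ℝ) : ‖S u - S v‖ ≤ ‖u - v‖ := by
  simpa using norm_sub_le_of_subadditive zero_le_one hS.2.1 (by simpa using hS.apply_le_norm) u v

lemma norm_le (hS : IsSublinearTransition S) (f : X →ᵇ ℝ) : ‖S f‖ ≤ ‖f‖ := by
  simpa [hS.map_zero] using hS.norm_sub_le f 0

lemma norm_iterate_le (hS : IsSublinearTransition S) (k : ℕ) (f : X →ᵇ ℝ) : ‖S^[k] f‖ ≤ ‖f‖ := by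
  induction k with
  | zero => rfl
  | succ k ih => rw [Function.iterate_succ_apply']; exact (hS.norm_le _).trans ih

lemma map_const (hS : IsSublinearTransition S) (c : ℝ) : S (const X c) = const X c := by
  ext x
  have : Nonempty X := ⟨x⟩
  have hsum : const X c + const X (-c) = 0 := by ext; simp
  have hadd := hS.2.1 (const X c) (const X (-c)) x
  have hc := hS.2.2 (const X c) x
  have hnc := hS.2.2 (const X (-c)) x
  simp only [hsum, hS.map_zero, BoundedContinuousFunction.coe_zero, Pi.zero_apply, const_apply,
    ciSup_const] at hadd hc hnc ⊢
  linarith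

lemma norm_map_add_sub_sub_le (hS : IsSublinearTransition S) (f u : X →ᵇ ℝ) {a : ℝ}
    (hu : ‖S u - u‖ ≤ a) (hu' : ‖S (-u) - -u‖ ≤ a) : ‖S (f + u) - S f - u‖ ≤ a := by
  refine (BoundedContinuousFunction.norm_le ((norm_nonneg _).trans hu)).2 fun x => ?_
  have h1 := (abs_le.1 ((norm_coe_le_norm _ x).trans hu))
  have h2 := (abs_le.1 ((norm_coe_le_norm _ x).trans hu'))
  have h3 := hS.2.1 f u x
  have h4 := hS.2.1 (f + u) (-u) x
  rw [add_neg_cancel_right] at h4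
  simp only [Real.norm_eq_abs, BoundedContinuousFunction.coe_sub, BoundedContinuousFunction.coe_neg,
    Pi.sub_apply, Pi.neg_apply] at h1 h2 ⊢
  rw [abs_le]
  constructor <;> linarith

lemma isSublinearRate_smul_sub (hS : IsSublinearTransition S) {c : ℝ} (hc : 0 ≤ c) :
    IsSublinearRate fun f => c • (S f - f) := by
  refine ⟨fun a ha f => ?_, fun f g x => ?_, fun a => ?_, fun f x hx _ => ?_⟩
  · dsimp only
    rw [hS.1 a ha]
    module
  · have := hS.2.1 f g x
    simp only [BoundedContinuousFunction.coe_smul, BoundedContinuousFunction.coe_sub,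
      BoundedContinuousFunction.coe_add, Pi.sub_apply, Pi.add_apply, smul_eq_mul]
    nlinarith
  · simp [hS.map_const]
  · have := hS.2.2 f x
    simp only [BoundedContinuousFunction.coe_smul, BoundedContinuousFunction.coe_sub,
      Pi.sub_apply, smul_eq_mul]
    exact mul_nonpos_of_nonneg_of_nonpos hc (by linarith)

section Displacement

variable (hS : IsSublinearTransition S) {a : ℝ} (ha : 0 ≤ a) (hSa : ∀ g, ‖S g - g‖ ≤ a * ‖g‖)
include hS ha hSa

lemma norm_iterate_sub_le (k : ℕ) (f : X →ᵇ ℝ) : ‖S^[k] f - f‖ ≤ k * a * ‖f‖ := by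
  induction k with
  | zero => simp
  | succ k ih =>
    calc ‖S^[k + 1] f - f‖ ≤ ‖S (S^[k] f) - S^[k] f‖ + ‖S^[k] f - f‖ := by
          rw [Function.iterate_succ_apply']; exact norm_sub_le_norm_sub_add_norm_sub _ _ _
      _ ≤ a * ‖f‖ + k * a * ‖f‖ :=
          add_le_add ((hSa _).trans (mul_le_mul_of_nonneg_left (hS.norm_iterate_le k f) ha)) ih
      _ = (k + 1 : ℕ) * a * ‖f‖ := by push_cast; ring

lemma norm_iterate_sub_sub_smul_le (k : ℕ) (f : X →ᵇ ℝ) :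
    ‖S^[k] f - f - (k : ℝ) • (S f - f)‖ ≤ (k * a) ^ 2 / 2 * ‖f‖ := by
  induction k with
  | zero => simp
  | succ k ih =>
    set D := S^[k] f - f
    have hD : ‖D‖ ≤ k * a * ‖f‖ := hS.norm_iterate_sub_le ha hSa k f
    have hkey : ‖S (f + D) - S f - D‖ ≤ a * ‖D‖ :=
      hS.norm_map_add_sub_sub_le f D (hSa D) (by simpa using hSa (-D))
    have hsplit : S^[k + 1] f - f - ((k + 1 : ℕ) : ℝ) • (S f - f)
        = (S (f + D) - S f - D) + (S^[k] f - f - (k : ℝ) • (S f - f)) := by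
      rw [Function.iterate_succ_apply', add_sub_cancel]
      push_cast
      module
    rw [hsplit]
    calc _ ≤ a * ‖D‖ + (k * a) ^ 2 / 2 * ‖f‖ := (norm_add_le _ _).trans (add_le_add hkey ih)
      _ ≤ a * (k * a * ‖f‖) + (k * a) ^ 2 / 2 * ‖f‖ := by gcongr
      _ ≤ ((k + 1 : ℕ) * a) ^ 2 / 2 * ‖f‖ := by
          push_cast
          nlinarith [mul_nonneg (mul_nonneg ha ha) (norm_nonneg f)]

lemma mul_norm_sub_le_norm_iterate_sub_add (k : ℕ) (g : X →ᵇ ℝ) :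
    k * ‖S g - g‖ ≤ ‖S^[k] g - g‖ + (k * a) ^ 2 / 2 * ‖g‖ := by
  have h := _root_.norm_sub_le (S^[k] g - g) (S^[k] g - g - (k : ℝ) • (S g - g))
  rw [_root_.sub_sub_cancel, norm_smul, Real.norm_of_nonneg (by positivity)] at h
  linarith [hS.norm_iterate_sub_sub_smul_le ha hSa k g]

end Displacement

lemma norm_sub_le_of_norm_iterate_sub_le (hS : IsSublinearTransition S) {ε : ℝ} (hε : 0 ≤ ε)
    (hε' : ε ≤ 1 / 3) {K : ℕ} (hK : 0 < K) (hiter : ∀ k ≤ K, ∀ g, ‖S^[k] g - g‖ ≤ ε * ‖g‖)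
    (g : X →ᵇ ℝ) : ‖S g - g‖ ≤ 2 * ε / K * ‖g‖ := by
  set A : Op X := fun g => S g - g
  have hA0 : A 0 = 0 := by simp [A, hS.map_zero]
  set a := (opSemiNorm A).toReal
  have hAε : opSemiNorm A ≤ ENNReal.ofReal ε := opSemiNorm_le_ofReal (by simpa using hiter 1 hK)
  have hSa : ∀ g, ‖S g - g‖ ≤ a * ‖g‖ :=
    norm_apply_le_of_opSemiNorm_le hA0 (ne_top_of_le_ne_top ofReal_ne_top hAε) le_rfl
  have ha : 0 ≤ a := ENNReal.toReal_nonneg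
  have haε : a ≤ ε := ENNReal.toReal_le_of_le_ofReal hε hAε
  -- `a` is the best constant, so the second-order expansion of `S^[k]` feeds back into `a` as
  -- `k a ≤ ε + (k a)² / 2`; in steps of `a ≤ ε`, `k a` cannot jump over the gap `(2 ε, 1]`.
  have hka : ∀ k ≤ K, k * a ≤ 2 * ε := by
    intro k hk
    induction k with
    | zero => simpa using hε
    | succ k ih =>
      set x := ((k + 1 : ℕ) : ℝ) * a
      have hx1 : x ≤ 1 := by
        have := ih (by omega)
        simp only [x]; push_cast; linarith
      have hbound : ∀ g, ‖A g‖ ≤ (ε + x ^ 2 / 2) / (k + 1 : ℕ) * ‖g‖ := fun g => by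
        rw [div_mul_eq_mul_div, le_div_iff₀ (by positivity)]
        linarith [hS.mul_norm_sub_le_norm_iterate_sub_add ha hSa (k + 1) g, hiter (k + 1) hk g]
      have hax : a ≤ (ε + x ^ 2 / 2) / (k + 1 : ℕ) :=
        ENNReal.toReal_le_of_le_ofReal (by positivity) (opSemiNorm_le_ofReal hbound)
      rw [le_div_iff₀ (by positivity), mul_comm] at hax
      nlinarith
  have hK' : (0 : ℝ) < K := by exact_mod_cast hK
  calc ‖S g - g‖ ≤ a * ‖g‖ := hSa g
    _ ≤ 2 * ε / K * ‖g‖ := by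
        gcongr
        rw [le_div_iff₀ hK', mul_comm]
        exact hka K le_rfl

end IsSublinearTransition

lemma IsSublinearRate.map_zero {X : Type*} [TopologicalSpace X] {Q : Op X}
    (hQ : IsSublinearRate Q) : Q 0 = 0 := by
  simpa using hQ.1 0 le_rfl 0

lemma IsSublinearRate.of_tendsto {X : Type*} [TopologicalSpace X] {ι : Type*} {l : Filter ι}
    [l.NeBot] {Q : Op X} {R : ι → Op X} (hR : ∀ i, IsSublinearRate (R i))
    (hQ : ∀ f, Tendsto (fun i => R i f) l (𝓝 (Q f))) : IsSublinearRate Q := by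
  have hpt : ∀ f x, Tendsto (fun i => R i f x) l (𝓝 (Q f x)) := fun f x =>
    ((continuous_eval_const x).tendsto _).comp (hQ f)
  refine ⟨fun c hc f => ?_, fun f g x => ?_, fun c => ?_, fun f x hx hfx => ?_⟩
  · exact tendsto_nhds_unique (by simpa only [(hR _).1 c hc] using hQ (c • f))
      ((hQ f).const_smul c)
  · exact le_of_tendsto_of_tendsto (hpt _ x) ((hpt f x).add (hpt g x))
      (Eventually.of_forall fun i => (hR i).2.1 f g x)
  · exact tendsto_nhds_unique (hQ _) (by simp only [(hR _).2.2.1 c]; exact tendsto_const_nhds)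
  · exact le_of_tendsto (hpt f x) (Eventually.of_forall fun i => (hR i).2.2.2 f x hx hfx)

lemma one_add_pow_le_exp_mul {a : ℝ} (ha : -1 ≤ a) (n : ℕ) : (1 + a) ^ n ≤ Real.exp (n * a) := by
  rw [Real.exp_nat_mul]
  exact pow_le_pow_left₀ (by linarith) (by linarith [Real.add_one_le_exp a]) n

section Semigroup

variable {X : Type*} [TopologicalSpace X] {T : ℝ → Op X}

lemma iterate_eq_of_semigroup (hT0 : T 0 = id)
    (hTsg : ∀ s t : ℝ, 0 ≤ s → 0 ≤ t → T (s + t) = T s ∘ T t) {h : ℝ} (hh : 0 ≤ h) (n : ℕ) :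
    (T h)^[n] = T (n * h) := by
  induction n with
  | zero => simp [hT0]
  | succ n ih =>
    rw [Function.iterate_succ', ih, ← hTsg h _ hh (by positivity)]
    congr 1
    push_cast
    ring

lemma IsUniformlyContinuousSG.exists_norm_sub_le (hUC : IsUniformlyContinuousSG T)
    (hT : ∀ t : ℝ, 0 ≤ t → IsSublinearTransition (T t)) (hT0 : T 0 = id) {ε : ℝ} (hε : 0 < ε) :
    ∃ δ > 0, ∀ h, 0 ≤ h → h ≤ δ → ∀ f, ‖T h f - f‖ ≤ ε * ‖f‖ := by
  have hev := ENNReal.tendsto_nhds_zero.1 (hUC 0 le_rfl) (ENNReal.ofReal ε) (by simpa using hε)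
  obtain ⟨δ, hδ, hsub⟩ := mem_nhdsGE_iff_exists_Icc_subset.1 hev
  refine ⟨δ, hδ, fun h h0 hhδ f => ?_⟩
  have := norm_apply_le_of_opSemiNorm_le (A := T h - T 0)
    (by simp [hT0, (hT h h0).map_zero]) ofReal_ne_top (hsub ⟨h0, hhδ⟩) f
  simpa [hT0, ENNReal.toReal_ofReal hε.le] using this

lemma IsUniformlyContinuousSG.exists_norm_sub_le_mul
    (hT : ∀ t : ℝ, 0 ≤ t → IsSublinearTransition (T t)) (hT0 : T 0 = id)
    (hTsg : ∀ s t : ℝ, 0 ≤ s → 0 ≤ t → T (s + t) = T s ∘ T t) (hUC : IsUniformlyContinuousSG T) :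
    ∃ δ > 0, ∀ h, 0 ≤ h → h ≤ δ → ∀ f, ‖T h f - f‖ ≤ δ⁻¹ * h * ‖f‖ := by
  obtain ⟨δ, hδ, hε⟩ := hUC.exists_norm_sub_le hT hT0 (ε := 1 / 4) (by norm_num)
  refine ⟨δ, hδ, fun h h0 hhδ f => ?_⟩
  rcases h0.eq_or_lt with rfl | hpos
  · simp [hT0]
  set K := ⌊δ / h⌋₊
  have hK1 : 1 ≤ K := Nat.le_floor (by rw [Nat.cast_one, le_div_iff₀ hpos]; linarith)
  have hKh : K * h ≤ δ := (le_div_iff₀ hpos).1 (Nat.floor_le (by positivity))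
  have hKh' : δ < 2 * K * h := by
    have := (div_lt_iff₀ hpos).1 (Nat.lt_floor_add_one (δ / h))
    have : (1 : ℝ) ≤ K := by exact_mod_cast hK1
    nlinarith
  have hiter : ∀ k ≤ K, ∀ g, ‖(T h)^[k] g - g‖ ≤ 1 / 4 * ‖g‖ := fun k hk g => by
    rw [iterate_eq_of_semigroup hT0 hTsg h0]
    refine hε _ (by positivity) (le_trans ?_ hKh) g
    gcongr
  refine ((hT h h0).norm_sub_le_of_norm_iterate_sub_le (by norm_num) (by norm_num) hK1 hiter
    f).trans ?_
  gcongr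
  rw [div_le_iff₀ (by positivity), inv_mul_eq_div, div_mul_eq_mul_div, le_div_iff₀ hδ]
  linarith

end Semigroup

noncomputable def diffQuot {X : Type*} [TopologicalSpace X] (T : ℝ → Op X) (s : ℝ) : Op X :=
  fun f => s⁻¹ • (T s f - f)

lemma norm_diffQuot_le {X : Type*} [TopologicalSpace X] {T : ℝ → Op X} {M s : ℝ} (hs : 0 < s)
    (hM : ∀ f, ‖T s f - f‖ ≤ M * s * ‖f‖) (f : X →ᵇ ℝ) : ‖diffQuot T s f‖ ≤ M * ‖f‖ := by
  rw [diffQuot, norm_smul, Real.norm_of_nonneg (by positivity), inv_mul_le_iff₀ hs]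
  linarith [hM f]

section Generator

variable {X : Type*} [TopologicalSpace X] {T : ℝ → Op X} {M δ : ℝ}
  (hT : ∀ t : ℝ, 0 ≤ t → IsSublinearTransition (T t)) (hT0 : T 0 = id)
  (hTsg : ∀ s t : ℝ, 0 ≤ s → 0 ≤ t → T (s + t) = T s ∘ T t) (hM0 : 0 ≤ M)
  (hM : ∀ h, 0 ≤ h → h ≤ δ → ∀ f, ‖T h f - f‖ ≤ M * h * ‖f‖)
include hT hT0 hTsg hM0 hM

lemma norm_diffQuot_mul_sub_le {s : ℝ} (hs : 0 < s) (hsδ : s ≤ δ) {k : ℕ} (hk : k ≠ 0)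
    (f : X →ᵇ ℝ) : ‖diffQuot T (k * s) f - diffQuot T s f‖ ≤ M ^ 2 * (k * s) / 2 * ‖f‖ := by
  have hk' : (0 : ℝ) < k := by exact_mod_cast Nat.pos_of_ne_zero hk
  have key := (hT s hs.le).norm_iterate_sub_sub_smul_le (by positivity) (hM s hs.le hsδ) k f
  rw [iterate_eq_of_semigroup hT0 hTsg hs.le] at key
  have hsplit : diffQuot T (k * s) f - diffQuot T s f
      = (k * s)⁻¹ • (T (k * s) f - f - (k : ℝ) • (T s f - f)) := by
    rw [diffQuot, diffQuot, smul_sub _ _ ((k : ℝ) • _), smul_smul, mul_inv_rev, mul_assoc,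
      inv_mul_cancel₀ hk'.ne', mul_one]
  rw [hsplit, norm_smul, Real.norm_of_nonneg (by positivity)]
  calc (k * s)⁻¹ * ‖T (k * s) f - f - (k : ℝ) • (T s f - f)‖
      ≤ (k * s)⁻¹ * ((k * (M * s)) ^ 2 / 2 * ‖f‖) := by gcongr
    _ = M ^ 2 * (k * s) / 2 * ‖f‖ := by field_simp

omit hT0 in
lemma norm_diffQuot_sub_diffQuot_le_sub {u s : ℝ} (hu : 0 < u) (hus : u ≤ s) (huδ : u ≤ δ)
    (hsuδ : s - u ≤ δ) (f : X →ᵇ ℝ) :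
    ‖diffQuot T s f - diffQuot T u f‖ ≤ 2 * M * (s - u) / s * ‖f‖ := by
  have hs : 0 < s := hu.trans_le hus
  have hTs : T s f = T (s - u) (T u f) := by
    rw [← Function.comp_apply (f := T (s - u)), ← hTsg _ _ (by linarith) hu.le, sub_add_cancel]
  have hsplit : diffQuot T s f - diffQuot T u f
      = s⁻¹ • (T (s - u) (T u f) - T u f) - (u⁻¹ - s⁻¹) • (T u f - f) := by
    rw [diffQuot, diffQuot, hTs]
    module
  have h1 : ‖T (s - u) (T u f) - T u f‖ ≤ M * (s - u) * ‖f‖ :=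
    (hM _ (by linarith) hsuδ _).trans (by gcongr; exact (hT u hu.le).norm_le f)
  have hus' : 0 ≤ u⁻¹ - s⁻¹ := sub_nonneg.2 (inv_anti₀ hu hus)
  rw [hsplit]
  calc _ ≤ s⁻¹ * ‖T (s - u) (T u f) - T u f‖ + (u⁻¹ - s⁻¹) * ‖T u f - f‖ := by
        refine (norm_sub_le _ _).trans_eq ?_
        rw [norm_smul, norm_smul, Real.norm_of_nonneg (by positivity), Real.norm_of_nonneg hus']
    _ ≤ s⁻¹ * (M * (s - u) * ‖f‖) + (u⁻¹ - s⁻¹) * (M * u * ‖f‖) := by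
        gcongr
        exact hM u hu.le huδ f
    _ = 2 * M * (s - u) / s * ‖f‖ := by field_simp; ring

lemma norm_diffQuot_sub_diffQuot_le {s' s : ℝ} (hs' : 0 < s') (hss : s' ≤ s) (hsδ : s ≤ δ)
    (f : X →ᵇ ℝ) :
    ‖diffQuot T s f - diffQuot T s' f‖ ≤ (2 * M * s' / s + M ^ 2 * s / 2) * ‖f‖ := by
  have hs : 0 < s := hs'.trans_le hss
  set k := ⌊s / s'⌋₊
  have hk : k ≠ 0 := (Nat.floor_pos.2 ((one_le_div hs').2 hss)).ne'
  have hks : k * s' ≤ s := (le_div_iff₀ hs').1 (Nat.floor_le (by positivity))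
  have hks' : s - k * s' < s' := by
    have := (div_lt_iff₀ hs').1 (Nat.lt_floor_add_one (s / s'))
    linarith
  have hk0 : 0 < k * s' := by positivity
  calc ‖diffQuot T s f - diffQuot T s' f‖
      ≤ ‖diffQuot T s f - diffQuot T (k * s') f‖ + ‖diffQuot T (k * s') f - diffQuot T s' f‖ :=
        norm_sub_le_norm_sub_add_norm_sub _ _ _
    _ ≤ 2 * M * (s - k * s') / s * ‖f‖ + M ^ 2 * (k * s') / 2 * ‖f‖ :=
        add_le_add (norm_diffQuot_sub_diffQuot_le_sub hT hTsg hM0 hM hk0 hks (by linarith)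
          (by linarith) f) (norm_diffQuot_mul_sub_le hT hT0 hTsg hM0 hM hs' (by linarith) hk f)
    _ ≤ (2 * M * s' / s + M ^ 2 * s / 2) * ‖f‖ := by
        rw [add_mul]
        gcongr

lemma exists_tendsto_diffQuot (hδ : 0 < δ) :
    ∃ Q : Op X, ∀ f, Tendsto (fun m : ℕ => diffQuot T (δ / 2 ^ m) f) atTop (𝓝 (Q f)) := by
  have hcauchy : ∀ f, CauchySeq fun m : ℕ => diffQuot T (δ / 2 ^ m) f := fun f =>
    cauchySeq_of_le_geometric_two (C := M ^ 2 * δ * ‖f‖) fun m => by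
      have hs2 : ((2 : ℕ) : ℝ) * (δ / 2 ^ (m + 1)) = δ / 2 ^ m := by
        rw [pow_succ, Nat.cast_ofNat]
        field_simp
      have := norm_diffQuot_mul_sub_le hT hT0 hTsg hM0 hM (s := δ / 2 ^ (m + 1)) (by positivity)
        (div_le_self hδ.le (one_le_pow₀ one_le_two)) two_ne_zero f
      rw [hs2] at this
      rw [dist_eq_norm]
      exact this.trans_eq (by ring)
  choose Q hQ using fun f => cauchySeq_tendsto_of_complete (hcauchy f)
  exact ⟨Q, hQ⟩

lemma exists_generator (hδ : 0 < δ) :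
    ∃ Q : Op X, IsSublinearRate Q ∧ (∀ f, ‖Q f‖ ≤ M * ‖f‖) ∧
      ∀ h, 0 ≤ h → h ≤ δ → ∀ g, ‖g + h • Q g - T h g‖ ≤ M ^ 2 / 2 * h ^ 2 * ‖g‖ := by
  obtain ⟨Q, hQ⟩ := exists_tendsto_diffQuot hT hT0 hTsg hM0 hM hδ
  set s : ℕ → ℝ := fun m => δ / 2 ^ m
  have hs : ∀ m, 0 < s m := fun m => by positivity
  have hsδ : ∀ m, s m ≤ δ := fun m => div_le_self hδ.le (one_le_pow₀ one_le_two)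
  have hs0 : Tendsto s atTop (𝓝 0) :=
    tendsto_const_nhds.div_atTop (tendsto_pow_atTop_atTop_of_one_lt one_lt_two)
  have hQrate : IsSublinearRate Q := IsSublinearRate.of_tendsto
    (fun m => (hT _ (hs m).le).isSublinearRate_smul_sub (inv_nonneg.2 (hs m).le)) hQ
  have hQM : ∀ f, ‖Q f‖ ≤ M * ‖f‖ := fun f => le_of_tendsto (hQ f).norm
    (Eventually.of_forall fun m => norm_diffQuot_le (hs m) (hM _ (hs m).le (hsδ m)) f)
  have hDQ : ∀ h, 0 < h → h ≤ δ → ∀ g, ‖diffQuot T h g - Q g‖ ≤ M ^ 2 * h / 2 * ‖g‖ := by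
    intro h hh hhδ g
    have hbound : Tendsto (fun m => (2 * M * s m / h + M ^ 2 * h / 2) * ‖g‖) atTop
        (𝓝 ((2 * M * 0 / h + M ^ 2 * h / 2) * ‖g‖)) :=
      ((((hs0.const_mul (2 * M)).div_const h).add_const _).mul_const _)
    rw [mul_zero, zero_div, zero_add] at hbound
    refine le_of_tendsto_of_tendsto (tendsto_const_nhds.sub (hQ g)).norm hbound ?_
    filter_upwards [hs0.eventually (gt_mem_nhds hh)] with m hm
    exact norm_diffQuot_sub_diffQuot_le hT hT0 hTsg hM0 hM (hs m) hm.le hhδ g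
  refine ⟨Q, hQrate, hQM, fun h h0 hhδ g => ?_⟩
  rcases h0.eq_or_lt with rfl | hh
  · simp [hT0]
  have hsplit : g + h • Q g - T h g = -(h • (diffQuot T h g - Q g)) := by
    rw [diffQuot, smul_sub, smul_smul, mul_inv_cancel₀ hh.ne', one_smul]
    abel
  rw [hsplit, norm_neg, norm_smul, Real.norm_of_nonneg hh.le]
  calc h * ‖diffQuot T h g - Q g‖ ≤ h * (M ^ 2 * h / 2 * ‖g‖) := by gcongr; exact hDQ h hh hhδ g
    _ = M ^ 2 / 2 * h ^ 2 * ‖g‖ := by ring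

end Generator

section Euler

variable {X : Type*} [TopologicalSpace X] {Q : Op X} {M : ℝ}

lemma norm_add_smul_sub_le {h : ℝ} (hh : 0 ≤ h) (hQ : IsSublinearRate Q) (hM0 : 0 ≤ M)
    (hQM : ∀ f, ‖Q f‖ ≤ M * ‖f‖) (u v : X →ᵇ ℝ) :
    ‖u + h • Q u - (v + h • Q v)‖ ≤ (1 + h * M) * ‖u - v‖ := by
  have hQlip := norm_sub_le_of_subadditive hM0 hQ.2.1
    (fun f x => (Real.le_norm_self _).trans ((norm_coe_le_norm _ x).trans (hQM f))) u v
  calc ‖u + h • Q u - (v + h • Q v)‖ = ‖(u - v) + h • (Q u - Q v)‖ := by congr 1; module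
    _ ≤ ‖u - v‖ + h * (M * ‖u - v‖) := by
        refine (norm_add_le _ _).trans ?_
        rw [norm_smul, Real.norm_of_nonneg hh]
        gcongr
    _ = (1 + h * M) * ‖u - v‖ := by ring

lemma tendsto_opSemiNorm_euler_sub {T : ℝ → Op X}
    (hT : ∀ t : ℝ, 0 ≤ t → IsSublinearTransition (T t)) (hT0 : T 0 = id)
    (hTsg : ∀ s t : ℝ, 0 ≤ s → 0 ≤ t → T (s + t) = T s ∘ T t) {C δ : ℝ} (hM0 : 0 ≤ M)
    (hC : 0 ≤ C) (hδ : 0 < δ) (hQ : IsSublinearRate Q) (hQM : ∀ f, ‖Q f‖ ≤ M * ‖f‖)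
    (hstep : ∀ h, 0 ≤ h → h ≤ δ → ∀ g, ‖g + h • Q g - T h g‖ ≤ C * h ^ 2 * ‖g‖)
    {t : ℝ} (ht : 0 ≤ t) : Tendsto (fun n => opSemiNorm (euler Q t n - T t)) atTop (𝓝 0) := by
  refine tendsto_opSemiNorm_zero ?_
    (tendsto_const_div_atTop_nhds_zero_nat (Real.exp (t * M) * C * t ^ 2))
  filter_upwards [eventually_ge_atTop 1, eventually_ge_atTop ⌈t / δ⌉₊] with n hn1 hnδ f
  have hn : (0 : ℝ) < n := by exact_mod_cast hn1
  have hh : 0 ≤ t / n := by positivity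
  have hhδ : t / n ≤ δ := by
    rw [div_le_iff₀ hn, mul_comm, ← div_le_iff₀ hδ]
    exact Nat.ceil_le.1 hnδ
  have key := norm_iterate_sub_iterate_le (le_add_of_nonneg_right (by positivity))
    (by positivity) (norm_add_smul_sub_le hh hQ hM0 hQM) (hT _ hh).norm_le (hstep _ hh hhδ) n f
  rw [iterate_eq_of_semigroup hT0 hTsg hh, mul_div_cancel₀ _ hn.ne'] at key
  have hpow : (1 + t / n * M) ^ n ≤ Real.exp (t * M) := by
    refine (one_add_pow_le_exp_mul (by linarith [mul_nonneg hh hM0]) n).trans_eq ?_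
    rw [← mul_assoc, mul_div_cancel₀ _ hn.ne']
  calc ‖(euler Q t n - T t) f‖ ≤ n * (1 + t / n * M) ^ n * (C * (t / n) ^ 2) * ‖f‖ := key
    _ = (1 + t / n * M) ^ n * (C * t ^ 2 / n) * ‖f‖ := by field_simp
    _ ≤ Real.exp (t * M) * (C * t ^ 2 / n) * ‖f‖ := by gcongr
    _ = Real.exp (t * M) * C * t ^ 2 / n * ‖f‖ := by ring

lemma norm_euler_sub_le (hM0 : 0 ≤ M) (hQM : ∀ f, ‖Q f‖ ≤ M * ‖f‖) {t : ℝ} (ht : 0 ≤ t) (n : ℕ)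
    (f : X →ᵇ ℝ) : ‖euler Q t n f - f‖ ≤ (Real.exp (t * M) - 1) * ‖f‖ := by
  have hstep : ∀ g, ‖g + (t / n) • Q g - g‖ ≤ t / n * M * ‖g‖ := fun g => by
    rw [add_sub_cancel_left, norm_smul, Real.norm_of_nonneg (by positivity), mul_assoc]
    gcongr
    exact hQM g
  refine (norm_iterate_sub_le_of_norm_sub_le (by positivity) hstep n f).trans ?_
  gcongr
  have ha : -1 ≤ t / n * M := by linarith [mul_nonneg (div_nonneg ht n.cast_nonneg) hM0]
  refine (one_add_pow_le_exp_mul ha n).trans (Real.exp_le_exp.2 ?_)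
  rcases n.eq_zero_or_pos with rfl | hn
  · simpa using mul_nonneg ht hM0
  · rw [← mul_assoc, mul_div_cancel₀ _ (by positivity)]

lemma norm_sub_le_of_tendsto_euler {T : ℝ → Op X}
    (hT : ∀ t : ℝ, 0 ≤ t → IsSublinearTransition (T t)) (hQ : IsSublinearRate Q) (hM0 : 0 ≤ M)
    (hQM : ∀ f, ‖Q f‖ ≤ M * ‖f‖) {t : ℝ} (ht : 0 ≤ t)
    (hconv : Tendsto (fun n => opSemiNorm (euler Q t n - T t)) atTop (𝓝 0)) (f : X →ᵇ ℝ) :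
    ‖T t f - f‖ ≤ (Real.exp (t * M) - 1) * ‖f‖ := by
  have hlim : Tendsto (fun n => (opSemiNorm (euler Q t n - T t)).toReal * ‖f‖
      + (Real.exp (t * M) - 1) * ‖f‖) atTop (𝓝 (0 * ‖f‖ + (Real.exp (t * M) - 1) * ‖f‖)) :=
    (((ENNReal.tendsto_toReal ENNReal.zero_ne_top).comp hconv).mul_const _).add_const _
  rw [zero_mul, zero_add] at hlim
  refine ge_of_tendsto hlim ?_
  filter_upwards [ENNReal.tendsto_nhds_zero.1 hconv 1 one_pos] with n hn
  have heuler0 : euler Q t n 0 = 0 := Function.iterate_fixed (by simp [hQ.map_zero]) n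
  have hdiff := norm_apply_le_of_opSemiNorm_le (by simp [heuler0, (hT t ht).map_zero])
    (ne_top_of_le_ne_top one_ne_top hn) le_rfl f
  calc ‖T t f - f‖ ≤ ‖(euler Q t n - T t) f‖ + ‖euler Q t n f - f‖ := by
        rw [← norm_neg (T t f - f)]
        exact (norm_sub_le _ _).trans_eq' (by congr 1; simp only [Pi.sub_apply]; abel)
    _ ≤ _ := add_le_add hdiff (norm_euler_sub_le hM0 hQM ht n f)

end Euler

lemma isUniformlyContinuousSG_of_norm_sub_le {X : Type*} [TopologicalSpace X] {T : ℝ → Op X}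
    (hT : ∀ t : ℝ, 0 ≤ t → IsSublinearTransition (T t))
    (hTsg : ∀ s t : ℝ, 0 ≤ s → 0 ≤ t → T (s + t) = T s ∘ T t) {ω : ℝ → ℝ}
    (hω : Tendsto ω (𝓝[≥] 0) (𝓝 0)) (hω0 : ∀ h, 0 ≤ h → 0 ≤ ω h)
    (hbound : ∀ h, 0 ≤ h → ∀ f, ‖T h f - f‖ ≤ ω h * ‖f‖) : IsUniformlyContinuousSG T := by
  intro t ht
  have hdist : ∀ s, 0 ≤ s → ∀ f, ‖T s f - T t f‖ ≤ ω |s - t| * ‖f‖ := by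
    intro s hs f
    rcases le_total t s with hts | hst
    · rw [abs_of_nonneg (sub_nonneg.2 hts), ← add_sub_cancel t s, hTsg t _ ht (by linarith)]
      exact ((hT t ht).norm_sub_le _ _).trans (by simpa using hbound _ (by linarith) f)
    · rw [abs_of_nonpos (sub_nonpos.2 hst), neg_sub, ← sub_add_cancel t s,
        hTsg _ s (by linarith) hs, Function.comp_apply, ← norm_neg, neg_sub, add_sub_cancel_right]
      exact (hbound _ (by linarith) _).trans
        (mul_le_mul_of_nonneg_left ((hT s hs).norm_le f) (hω0 _ (by linarith)))
  have habs : Tendsto (fun s => |s - t|) (𝓝[Set.Ici 0] t) (𝓝[≥] 0) :=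
    tendsto_nhdsWithin_iff.2 ⟨((continuous_id.sub continuous_const).abs.tendsto' t 0
      (by simp)).mono_left nhdsWithin_le_nhds,
      Eventually.of_forall fun _ => Set.mem_Ici.2 (abs_nonneg _)⟩
  refine tendsto_opSemiNorm_zero ?_ (hω.comp habs)
  filter_upwards [self_mem_nhdsWithin] with s hs f
  exact hdist s hs f

theorem stmt_0_general {X : Type*} [TopologicalSpace X]
    (T : ℝ → Op X)
    (hT : ∀ t : ℝ, 0 ≤ t → IsSublinearTransition (T t))
    (hT0 : T 0 = id)
    (hTsg : ∀ s t : ℝ, 0 ≤ s → 0 ≤ t → T (s + t) = T s ∘ T t) :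
    IsUniformlyContinuousSG T ↔
      ∃ Q : Op X, IsSublinearRate Q ∧ opSemiNorm Q ≠ ⊤ ∧
        ∀ t : ℝ, 0 ≤ t →
          Tendsto (fun n => opSemiNorm (euler Q t n - T t)) atTop (nhds 0) := by
  constructor
  · intro hUC
    obtain ⟨δ, hδ, hM⟩ := hUC.exists_norm_sub_le_mul hT hT0 hTsg
    have hM0 : 0 ≤ δ⁻¹ := inv_nonneg.2 hδ.le
    obtain ⟨Q, hQ, hQM, hstep⟩ := exists_generator hT hT0 hTsg hM0 hM hδ
    exact ⟨Q, hQ, ne_top_of_le_ne_top ofReal_ne_top (opSemiNorm_le_ofReal hQM),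
      fun t ht => tendsto_opSemiNorm_euler_sub hT hT0 hTsg hM0 (by positivity) hδ hQ hQM hstep ht⟩
  · rintro ⟨Q, hQ, hQfin, hconv⟩
    set M := (opSemiNorm Q).toReal
    have hQM := norm_apply_le_of_opSemiNorm_le hQ.map_zero hQfin le_rfl
    have hM0 : 0 ≤ M := ENNReal.toReal_nonneg
    refine isUniformlyContinuousSG_of_norm_sub_le hT hTsg (ω := fun h => Real.exp (h * M) - 1)
      ?_ (fun h hh => by simpa using Real.one_le_exp (mul_nonneg hh hM0))
      fun h hh => norm_sub_le_of_tendsto_euler hT hQ hM0 hQM hh (hconv h hh)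
    have hcont : Continuous fun h => Real.exp (h * M) - 1 := by fun_prop
    simpa using (hcont.tendsto 0).mono_left nhdsWithin_le_nhds

theorem stmt_0 {X : Type*} [Countable X] [TopologicalSpace X] [DiscreteTopology X]
    (T : ℝ → Op X)
    (hT : ∀ t : ℝ, 0 ≤ t → IsSublinearTransition (T t))
    (hT0 : T 0 = id)
    (hTsg : ∀ s t : ℝ, 0 ≤ s → 0 ≤ t → T (s + t) = T s ∘ T t) :
    IsUniformlyContinuousSG T ↔
      ∃ Q : Op X, IsSublinearRate Q ∧ opSemiNorm Q ≠ ⊤ ∧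
        ∀ t : ℝ, 0 ≤ t →
          Tendsto (fun n => opSemiNorm (euler Q t n - T t)) atTop (nhds 0) :=
  stmt_0_general T hT hT0 hTsg
end

section
/- For any sublinear rate operator Q on ℬ, the operator seminorm of Q satisfies ‖Q‖ = 2·sup{[Q(1 − 1_x)](x) : x ∈ X} = sup{[Q(1 − 2·1_x)](x) : x ∈ X}, where the equalities hold in [0,∞]. -/
/-
The test function `e_x = 1 - 2·1_x` is extremal. The function `f - ‖f‖ e_x` attains its maximum
`f x + ‖f‖ ≥ 0` at `x`, so subadditivity and the positive maximum principle give
`[Qf](x) ≤ ‖f‖ [Q e_x](x)`; applied to `-f`, together with `0 = Q0 ≤ Qf + Q(-f)`, this bounds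
`|[Qf](x)|` as well, while `‖e_x‖ = 1` gives the reverse inequality. Finally
`2(1 - 1_x) = e_x + 1`, and `Q` ignores added constants.
-/

open Filter Topology BoundedContinuousFunction ENNReal NNReal

section Indicator

variable {X : Type*} [TopologicalSpace X] [DiscreteTopology X]

lemma indic_apply_self (x : X) : indic x x = 1 := by
  simp [indic]

lemma indic_apply_of_ne {x y : X} (h : y ≠ x) : indic x y = 0 := by
  simp [indic, h]

lemma one_sub_two_smul_indic_apply_self (x : X) : (1 - (2 : ℝ) • indic x) x = -1 := by
  norm_num [indic_apply_self]

lemma one_sub_two_smul_indic_apply_of_ne {x y : X} (h : y ≠ x) :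
    (1 - (2 : ℝ) • indic x) y = 1 := by
  simp [indic_apply_of_ne h]

lemma norm_one_sub_two_smul_indic (x : X) : ‖1 - (2 : ℝ) • indic x‖ = 1 := by
  refine le_antisymm ((norm_le zero_le_one).2 fun y => ?_) ?_
  · rcases eq_or_ne y x with rfl | hy
    · simp [one_sub_two_smul_indic_apply_self]
    · simp [one_sub_two_smul_indic_apply_of_ne hy]
  · have := norm_coe_le_norm (1 - (2 : ℝ) • indic x) x
    rwa [one_sub_two_smul_indic_apply_self, norm_neg, norm_one] at this

end Indicator

section OpSemiNorm

variable {X : Type*} [TopologicalSpace X]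

lemma opSemiNorm_le {A : Op X} {C : ℝ≥0∞} (h : ∀ f, ‖A f‖ₑ ≤ C * ‖f‖ₑ) :
    opSemiNorm A ≤ C :=
  iSup₂_le fun f _ => ENNReal.div_le_of_le_mul (h f)

lemma enorm_apply_le_opSemiNorm (A : Op X) {f : X →ᵇ ℝ} (hf : ‖f‖ = 1) :
    ‖A f‖ₑ ≤ opSemiNorm A := by
  have hf₀ : f ≠ 0 := by
    rintro rfl
    simp at hf
  have hf₁ : ‖f‖ₑ = 1 := by
    rw [← ofReal_norm, hf, ENNReal.ofReal_one]
  calc ‖A f‖ₑ = ‖A f‖ₑ / ‖f‖ₑ := by rw [hf₁, div_one]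
    _ ≤ opSemiNorm A := le_iSup₂ (f := fun f (_ : f ≠ 0) => ‖A f‖ₑ / ‖f‖ₑ) f hf₀

end OpSemiNorm

namespace IsSublinearRate

variable {X : Type*} [TopologicalSpace X] {Q : Op X} (hQ : IsSublinearRate Q)
include hQ

lemma map_zero_s3 : Q 0 = 0 :=
  hQ.2.2.1 0

lemma map_add_const (f : X →ᵇ ℝ) (c : ℝ) : Q (f + const X c) = Q f := by
  have hcancel : f + const X c + const X (-c) = f := by
    ext
    simp
  ext x
  refine le_antisymm ?_ ?_
  · simpa [hQ.2.2.1 c] using hQ.2.1 f (const X c) x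
  · simpa [hQ.2.2.1 (-c), hcancel] using hQ.2.1 (f + const X c) (const X (-c)) x

lemma neg_apply_le_map_neg (f : X →ᵇ ℝ) (x : X) : -Q f x ≤ Q (-f) x := by
  have := hQ.2.1 f (-f) x
  rw [add_neg_cancel, hQ.map_zero_s3] at this
  simp only [BoundedContinuousFunction.coe_zero, Pi.zero_apply] at this
  linarith

lemma map_apply_nonpos_of_forall_le {f : X →ᵇ ℝ} {x : X} (hmax : ∀ y, f y ≤ f x)
    (hx : 0 ≤ f x) : Q f x ≤ 0 :=
  have : Nonempty X := ⟨x⟩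
  hQ.2.2.2 f x (le_antisymm (ciSup_le hmax) (le_ciSup ⟨f x, Set.forall_mem_range.2 hmax⟩ x)) hx

variable [DiscreteTopology X]

lemma map_one_sub_two_smul_indic (x : X) :
    Q (1 - (2 : ℝ) • indic x) = (2 : ℝ) • Q (1 - indic x) := by
  rw [← hQ.1 2 zero_le_two, ← hQ.map_add_const _ 1]
  congr 1
  ext y
  simp only [BoundedContinuousFunction.coe_add, BoundedContinuousFunction.coe_sub,
    BoundedContinuousFunction.coe_smul, BoundedContinuousFunction.coe_one, const_apply,
    Pi.add_apply, Pi.sub_apply, Pi.one_apply, smul_eq_mul]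
  ring

lemma map_apply_le_norm_mul (f : X →ᵇ ℝ) (x : X) :
    Q f x ≤ ‖f‖ * Q (1 - (2 : ℝ) • indic x) x := by
  set e := 1 - (2 : ℝ) • indic x
  have hf (z : X) : |f z| ≤ ‖f‖ := f.norm_coe_le_norm z
  have hx : (f - ‖f‖ • e) x = f x + ‖f‖ := by
    rw [BoundedContinuousFunction.sub_apply, BoundedContinuousFunction.smul_apply, smul_eq_mul,
      show e x = -1 from one_sub_two_smul_indic_apply_self x]
    ring
  have hmax (y : X) : (f - ‖f‖ • e) y ≤ (f - ‖f‖ • e) x := by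
    rcases eq_or_ne y x with rfl | hy
    · exact le_rfl
    · have hy' : (f - ‖f‖ • e) y = f y - ‖f‖ := by
        rw [BoundedContinuousFunction.sub_apply, BoundedContinuousFunction.smul_apply,
          smul_eq_mul, show e y = 1 from one_sub_two_smul_indic_apply_of_ne hy, mul_one]
      rw [hx, hy']
      linarith [(abs_le.1 (hf x)).1, (abs_le.1 (hf y)).2]
  have hnonneg : 0 ≤ (f - ‖f‖ • e) x := by
    rw [hx]
    linarith [(abs_le.1 (hf x)).1]
  have hsplit := hQ.2.1 (‖f‖ • e) (f - ‖f‖ • e) x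
  rw [add_sub_cancel, hQ.1 _ (norm_nonneg f)] at hsplit
  simp only [BoundedContinuousFunction.coe_smul, smul_eq_mul] at hsplit
  linarith [hQ.map_apply_nonpos_of_forall_le hmax hnonneg]

lemma abs_apply_le_norm_mul (f : X →ᵇ ℝ) (x : X) :
    |Q f x| ≤ ‖f‖ * Q (1 - (2 : ℝ) • indic x) x := by
  have := hQ.map_apply_le_norm_mul (-f) x
  rw [norm_neg] at this
  exact abs_le.2 ⟨by linarith [hQ.neg_apply_le_map_neg f x], hQ.map_apply_le_norm_mul f x⟩

lemma enorm_map_le (f : X →ᵇ ℝ) :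
    ‖Q f‖ₑ ≤ (⨆ x, ENNReal.ofReal (Q (1 - (2 : ℝ) • indic x) x)) * ‖f‖ₑ := by
  rw [enorm_eq_iSup_enorm]
  refine iSup_le fun x => ?_
  calc ‖Q f x‖ₑ = ENNReal.ofReal |Q f x| := (ofReal_norm _).symm
    _ ≤ ENNReal.ofReal (‖f‖ * Q (1 - (2 : ℝ) • indic x) x) :=
      ENNReal.ofReal_le_ofReal (hQ.abs_apply_le_norm_mul f x)
    _ = ENNReal.ofReal (Q (1 - (2 : ℝ) • indic x) x) * ‖f‖ₑ := by
      rw [ENNReal.ofReal_mul (norm_nonneg f), ofReal_norm, mul_comm]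
    _ ≤ _ := by
      gcongr
      exact le_iSup (fun y => ENNReal.ofReal (Q (1 - (2 : ℝ) • indic y) y)) x

end IsSublinearRate

theorem stmt_3_general {X : Type*} [TopologicalSpace X] [DiscreteTopology X]
    (Q : Op X) (hQ : IsSublinearRate Q) :
    opSemiNorm Q = 2 * (⨆ x : X, ENNReal.ofReal (Q (1 - indic x) x)) ∧
    opSemiNorm Q = ⨆ x : X, ENNReal.ofReal (Q (1 - (2 : ℝ) • indic x) x) := by
  have hsup : opSemiNorm Q = ⨆ x : X, ENNReal.ofReal (Q (1 - (2 : ℝ) • indic x) x) := by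
    refine le_antisymm (opSemiNorm_le hQ.enorm_map_le) (iSup_le fun x => ?_)
    calc ENNReal.ofReal (Q (1 - (2 : ℝ) • indic x) x)
        ≤ ENNReal.ofReal ‖Q (1 - (2 : ℝ) • indic x)‖ :=
          ENNReal.ofReal_le_ofReal ((Real.le_norm_self _).trans (norm_coe_le_norm _ x))
      _ = ‖Q (1 - (2 : ℝ) • indic x)‖ₑ := ofReal_norm _
      _ ≤ opSemiNorm Q := enorm_apply_le_opSemiNorm Q (norm_one_sub_two_smul_indic x)
  refine ⟨?_, hsup⟩
  rw [hsup, ENNReal.mul_iSup]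
  refine iSup_congr fun x => ?_
  rw [hQ.map_one_sub_two_smul_indic, BoundedContinuousFunction.smul_apply,
    smul_eq_mul, ENNReal.ofReal_mul zero_le_two, ENNReal.ofReal_ofNat]

theorem stmt_3 {X : Type*} [Countable X] [TopologicalSpace X] [DiscreteTopology X]
    (Q : Op X) (hQ : IsSublinearRate Q) :
    opSemiNorm Q = 2 * (⨆ x : X, ENNReal.ofReal (Q (1 - indic x) x)) ∧
    opSemiNorm Q = ⨆ x : X, ENNReal.ofReal (Q (1 - (2 : ℝ) • indic x) x) :=
  stmt_3_general Q hQ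
end
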